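/- arXiv:2511.07285 — 2 statements merged into one kernel-verified Lean document; each statement's English description precedes it below -/
import Mathlib

section
/- For every spanning tree T of a connected finite graph G, there exists a postman set J of G with J ⊆ E(T). -/
open Finset

/-- `J` is a postman set of `G`: `J ⊆ E(G)` and doubling the edges of `J`
makes every vertex of even degree. -/
def IsPostmanSet {V : Type*} [Fintype V] [DecidableEq V]
    (G : SimpleGraph V) [DecidableRel G.Adj] (J : Finset (Sym2 V)) : Prop :=
  J ⊆ G.edgeFinset ∧ ∀ v : V, Even (G.degree v + (J.filter (fun e => v ∈ e)).card)

private lemma cast_zmod2 (n : ℕ) : (n : ZMod 2) = if Odd n then 1 else 0 := by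
  rcases Nat.even_or_odd n with h | h
  · simp [Nat.not_odd_iff_even.mpr h, ZMod.natCast_eq_zero_iff_even.mpr h]
  · simp [h, ZMod.natCast_eq_one_iff_odd.mpr h]

/-- parity of the number of edges of a walk (with multiplicity) incident to `u`. -/
private lemma walk_filter_parity {V : Type*} [DecidableEq V] {T : SimpleGraph V}
    {a b : V} (w : T.Walk a b) (u : V) :
    (((w.edges.filter (fun e => u ∈ e)).length : ℕ) : ZMod 2)
      = (if u = a then 1 else 0) + (if u = b then 1 else 0) := by
  induction w with
  | nil =>
    rename_i x
    simp only [SimpleGraph.Walk.edges_nil, List.filter_nil, List.length_nil, Nat.cast_zero]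
    by_cases h : u = x
    · rw [if_pos h]; decide
    · simp [h]
  | @cons a c b h p ih =>
    have hac : a ≠ c := h.ne
    simp only [SimpleGraph.Walk.edges_cons, List.filter_cons]
    by_cases hu : u ∈ (s(a, c) : Sym2 V)
    · rw [if_pos (decide_eq_true hu), List.length_cons, Nat.cast_add, Nat.cast_one, ih]
      rw [Sym2.mem_iff] at hu
      rcases hu with rfl | rfl
      · rw [if_neg hac, if_pos rfl]; ring
      · rw [if_pos rfl, if_neg (Ne.symm hac)]
        have h2 : (1 : ZMod 2) + 1 = 0 := by decide
        linear_combination h2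
    · rw [Sym2.mem_iff] at hu
      push_neg at hu
      rw [if_neg (by simp [Sym2.mem_iff, hu.1, hu.2]), ih, if_neg hu.1, if_neg hu.2]

private lemma sum_count_eq_length_filter {V : Type*} [DecidableEq V]
    (F : Finset (Sym2 V)) (u : V) (l : List (Sym2 V)) (hl : ∀ e ∈ l, e ∈ F) :
    ∑ e ∈ F.filter (fun e => u ∈ e), l.count e
      = (l.filter (fun e => u ∈ e)).length := by
  induction l with
  | nil => simp
  | cons a l ih =>
    have ha : a ∈ F := hl a (by simp)
    have ih' := ih (fun e he => hl e (by simp [he]))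
    simp only [List.count_cons, List.filter_cons]
    rw [Finset.sum_add_distrib, ih']
    by_cases hu : u ∈ a
    · have : ∑ e ∈ F.filter (fun e => u ∈ e), (if a = e then 1 else 0)
          = 1 := by
        rw [Finset.sum_ite_eq (F.filter (fun e => u ∈ e)) a (fun _ => 1)]
        simp [ha, hu]
      simp [hu, this, Nat.add_comm]
    · have : ∑ e ∈ F.filter (fun e => u ∈ e), (if a = e then 1 else 0)
          = 0 := by
        rw [Finset.sum_ite_eq (F.filter (fun e => u ∈ e)) a (fun _ => 1)]
        simp [hu]
      simp [hu, this]

theorem stmt3 {V : Type*} [Fintype V] [DecidableEq V]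
    (G T : SimpleGraph V) [DecidableRel G.Adj] [DecidableRel T.Adj]
    (hG : G.Connected) (hTG : T ≤ G) (hT : T.IsTree) :
    ∃ J : Finset (Sym2 V), J ⊆ T.edgeFinset ∧ IsPostmanSet G J := by
  classical
  obtain ⟨r⟩ := hG.nonempty
  set S : Finset V := univ.filter (fun v => Odd (G.degree v)) with hS
  have hScard : Even S.card := G.even_card_odd_degree_vertices
  have w : ∀ v : V, T.Walk v r := fun v => (hT.isConnected v r).some
  set cnt : Sym2 V → ℕ := fun e => ∑ v ∈ S, (w v).edges.count e with hcnt
  refine ⟨T.edgeFinset.filter (fun e => Odd (cnt e)), filter_subset _ _,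
    (filter_subset _ _).trans (by
      rw [SimpleGraph.edgeFinset_subset_edgeFinset]
      exact hTG), ?_⟩
  intro u
  rw [← ZMod.natCast_eq_zero_iff_even, Nat.cast_add]
  -- compute the cast of the card of the filtered set
  have key : ((((T.edgeFinset.filter (fun e => Odd (cnt e))).filter
      (fun e => u ∈ e)).card : ℕ) : ZMod 2)
      = (if u ∈ S then 1 else 0) := by
    rw [Finset.filter_filter]
    have h1 : (T.edgeFinset.filter (fun e => Odd (cnt e) ∧ u ∈ e))
        = (T.edgeFinset.filter (fun e => u ∈ e)).filter (fun e => Odd (cnt e)) := by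
      rw [Finset.filter_filter]
      apply Finset.filter_congr
      intro e _
      tauto
    rw [h1, Finset.card_filter, Nat.cast_sum]
    have h2 : ∀ e ∈ T.edgeFinset.filter (fun e => u ∈ e),
        ((if Odd (cnt e) then 1 else 0 : ℕ) : ZMod 2) = (cnt e : ZMod 2) := by
      intro e _
      rw [cast_zmod2 (cnt e)]
      by_cases h : Odd (cnt e) <;> simp [h]
    rw [Finset.sum_congr rfl h2]
    have h3 : ∀ e, (cnt e : ZMod 2) = ∑ v ∈ S, (((w v).edges.count e : ℕ) : ZMod 2) := by
      intro e; rw [hcnt]; push_cast; ring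
    rw [Finset.sum_congr rfl (fun e _ => h3 e), Finset.sum_comm]
    have h4 : ∀ v ∈ S, ∑ e ∈ T.edgeFinset.filter (fun e => u ∈ e),
        (((w v).edges.count e : ℕ) : ZMod 2)
        = (if u = v then 1 else 0) + (if u = r then 1 else 0) := by
      intro v _
      rw [← Nat.cast_sum, sum_count_eq_length_filter T.edgeFinset u (w v).edges
        (fun e he => SimpleGraph.mem_edgeFinset.mpr ((w v).edges_subset_edgeSet he))]
      exact walk_filter_parity (w v) u
    rw [Finset.sum_congr rfl h4, Finset.sum_add_distrib, Finset.sum_const]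
    have h5 : ∑ v ∈ S, (if u = v then (1 : ZMod 2) else 0) = if u ∈ S then 1 else 0 :=
      Finset.sum_ite_eq S u (fun _ => 1)
    have h6 : (S.card • (if u = r then (1 : ZMod 2) else 0)) = 0 := by
      obtain ⟨k, hk⟩ := hScard
      by_cases h : u = r
      · subst h
        rw [if_pos rfl, nsmul_eq_mul, mul_one, hk]
        push_cast
        have h7 : (k : ZMod 2) + k = 2 * k := by ring
        rw [h7, show (2 : ZMod 2) = 0 by decide, zero_mul]
      · simp [h]
    rw [h5, h6, add_zero]
  rw [key, cast_zmod2]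
  by_cases h : u ∈ S
  · have : Odd (G.degree u) := by
      rw [hS, Finset.mem_filter] at h; exact h.2
    rw [if_pos this, if_pos h]
    decide
  · have : ¬ Odd (G.degree u) := by
      rw [hS] at h; simp at h; exact Nat.not_odd_iff_even.mpr h
    simp [this, h]
end

section
/- Let k ≥ 3 and let G be a cyclically k-edge-connected cubic graph with perfect matching M. Define f(e) = 1/k for e ∈ M and f(e) = (k−1)/(2k) for e ∉ M. Then for every odd-cardinality vertex set U, the sum of f over the cut δ(U) is at least 1. -/
open Finset

/-- `M` is a perfect matching of `G`, viewed as a set of edges. -/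
def IsPerfectMatchingSet {V : Type*} [Fintype V] [DecidableEq V]
    (G : SimpleGraph V) [DecidableRel G.Adj] (M : Finset (Sym2 V)) : Prop :=
  M ⊆ G.edgeFinset ∧ ∀ v : V, (M.filter (fun e => v ∈ e)).card = 1

/-- The edge cut `δ(U)`: edges of `G` with exactly one endpoint in `U`. -/
def edgeCut {V : Type*} (G : SimpleGraph V) (U : Set V) : Set (Sym2 V) :=
  {e | ∃ a b, G.Adj a b ∧ e = s(a, b) ∧ a ∈ U ∧ b ∉ U}

/-- `G` is cyclically `k`-edge-connected: every edge cut separating two parts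
each containing a cycle has at least `k` edges. -/
def CyclicallyEdgeConnected {V : Type*} (G : SimpleGraph V) (k : ℕ) : Prop :=
  ∀ U : Set V, ¬ (G.induce U).IsAcyclic → ¬ (G.induce Uᶜ).IsAcyclic →
    k ≤ (edgeCut G U).ncard

open SimpleGraph

lemma mem_edgeCut_iff {V : Type*} {G : SimpleGraph V} {U : Set V} {a b : V} (h : G.Adj a b) :
    s(a, b) ∈ edgeCut G U ↔ ((a ∈ U ∧ b ∉ U) ∨ (b ∈ U ∧ a ∉ U)) := by
  constructor
  · rintro ⟨x, y, hxy, he, hx, hy⟩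
    rcases Sym2.eq_iff.mp he with ⟨h1, h2⟩ | ⟨h1, h2⟩
    · subst h1; subst h2; exact Or.inl ⟨hx, hy⟩
    · subst h1; subst h2; exact Or.inr ⟨hx, hy⟩
  · rintro (⟨ha, hb⟩ | ⟨hb, ha⟩)
    · exact ⟨a, b, h, rfl, ha, hb⟩
    · exact ⟨b, a, h.symm, Sym2.eq_swap, hb, ha⟩

lemma parity_count {V : Type*} [Fintype V] [DecidableEq V]
    (G : SimpleGraph V) [DecidableRel G.Adj] (U : Set V) [DecidablePred (· ∈ U)]
    (E : Finset (Sym2 V)) (hE : E ⊆ G.edgeFinset)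
    [DecidablePred (· ∈ edgeCut G U)] :
    ((∑ v ∈ Finset.univ.filter (· ∈ U), (E.filter (fun e => v ∈ e)).card : ℕ) : ZMod 2)
      = ((E.filter (· ∈ edgeCut G U)).card : ZMod 2) := by
  classical
  set Uf := Finset.univ.filter (· ∈ U) with hUf
  have hswap : ∑ v ∈ Uf, (E.filter (fun e => v ∈ e)).card
      = ∑ e ∈ E, (Uf.filter (fun v => v ∈ e)).card := by
    simp_rw [Finset.card_filter]
    exact Finset.sum_comm
  rw [hswap, Finset.card_filter, Nat.cast_sum, Nat.cast_sum]
  apply Finset.sum_congr rfl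
  intro e he
  have heG : e ∈ G.edgeSet := by
    rw [← SimpleGraph.mem_edgeFinset]; exact hE he
  induction e with
  | _ a b =>
    have hadj : G.Adj a b := heG
    have hab : a ≠ b := hadj.ne
    have hfil : Uf.filter (fun v => v ∈ s(a, b)) = ({a, b} : Finset V).filter (· ∈ U) := by
      ext v
      simp only [hUf, Finset.mem_filter, Finset.mem_univ, true_and, Sym2.mem_iff,
        Finset.mem_insert, Finset.mem_singleton]
      tauto
    rw [hfil, Finset.card_filter, Finset.sum_pair hab]
    by_cases ha : a ∈ U <;> by_cases hb : b ∈ U <;>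
      · simp [mem_edgeCut_iff hadj, ha, hb]
        try decide

lemma path_edge_fst_unique {W : Type*} {H : SimpleGraph W} {v u : W} (r : H.Walk v u)
    (hr : r.IsPath) {x y : W} (hx : s(v, x) ∈ r.edges) (hy : s(v, y) ∈ r.edges) : x = y := by
  cases r with
  | nil => simp at hx
  | cons h rest =>
      rename_i w
      rw [Walk.edges_cons, List.mem_cons] at hx hy
      rw [Walk.cons_isPath_iff] at hr
      have hxw : x = w := by
        rcases hx with hx | hx
        · rcases Sym2.eq_iff.mp hx with ⟨-, h1⟩ | ⟨h1, h2⟩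
          · exact h1
          · exact absurd h1 h.ne
        · exact absurd (Walk.fst_mem_support_of_mem_edges rest hx) hr.2
      have hyw : y = w := by
        rcases hy with hy | hy
        · rcases Sym2.eq_iff.mp hy with ⟨-, h1⟩ | ⟨h1, h2⟩
          · exact h1
          · exact absurd h1 h.ne
        · exact absurd (Walk.fst_mem_support_of_mem_edges rest hy) hr.2
      rw [hxw, hyw]

lemma not_acyclic_of_two_nbrs {W : Type*} [Fintype W] [ne : Nonempty W] (H : SimpleGraph W)
    (h2 : ∀ v : W, ∃ a b : W, a ≠ b ∧ H.Adj v a ∧ H.Adj v b) : ¬ H.IsAcyclic := by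
  classical
  intro hac
  let P : ℕ → Prop := fun n => ∃ (u v : W) (p : H.Walk u v), p.IsPath ∧ p.length = n
  have h0 : P 0 := ⟨ne.some, ne.some, .nil, Walk.IsPath.nil, rfl⟩
  obtain ⟨u, v, p, hp, hlen⟩ : P (Nat.findGreatest P (Fintype.card W)) :=
    Nat.findGreatest_spec (Nat.zero_le _) h0
  have hmax : ∀ {x y : W} (q : H.Walk x y), q.IsPath → q.length ≤ p.length := by
    intro x y q hq
    by_contra hlt
    push_neg at hlt
    rw [hlen] at hlt
    exact Nat.findGreatest_is_greatest hlt (le_of_lt hq.length_lt) ⟨x, y, q, hq, rfl⟩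
  set q := p.reverse with hqdef
  have hqp : q.IsPath := hp.reverse
  obtain ⟨a, b, hab, hva, hvb⟩ := h2 v
  have hext : ∀ x, H.Adj v x → x ∈ q.support := by
    intro x hx
    by_contra hc
    have hp' : (Walk.cons hx.symm q).IsPath := hqp.cons hc
    have := hmax _ hp'
    simp [Walk.length_cons, hqdef, Walk.length_reverse] at this
  have hxex : ∃ x, H.Adj v x ∧ s(x, v) ∉ q.edges := by
    by_contra hcon
    push_neg at hcon
    have ha := hcon a hva
    have hb := hcon b hvb
    rw [Sym2.eq_swap] at ha hb
    exact hab (path_edge_fst_unique q hqp ha hb)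
  obtain ⟨x, hvx, hxe⟩ := hxex
  have hxs : x ∈ q.support := hext x hvx
  have hcyc : (Walk.cons hvx.symm (q.takeUntil x hxs)).IsCycle := by
    rw [Walk.cons_isCycle_iff]
    exact ⟨hqp.takeUntil hxs, fun hmem => hxe (Walk.edges_takeUntil_subset q hxs hmem)⟩
  exact hac _ hcyc

theorem stmt14 {V : Type*} [Fintype V] [DecidableEq V]
    (G : SimpleGraph V) [DecidableRel G.Adj]
    (k : ℕ) (hk : 3 ≤ k)
    (hcub : G.IsRegularOfDegree 3)
    (hcyc : CyclicallyEdgeConnected G k)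
    (M : Finset (Sym2 V)) (hM : IsPerfectMatchingSet G M)
    (f : Sym2 V → ℝ)
    (hfM : ∀ e ∈ M, f e = 1 / (k : ℝ))
    (hfnM : ∀ e ∈ G.edgeFinset, e ∉ M → f e = ((k : ℝ) - 1) / (2 * k))
    (U : Set V) (hU : Odd U.ncard) :
    1 ≤ ∑ᶠ e ∈ edgeCut G U, f e := by
  classical
  obtain ⟨hMsub, hMdeg⟩ := hM
  have hkR : (3 : ℝ) ≤ (k : ℝ) := by exact_mod_cast hk
  have hk0 : (0 : ℝ) < (k : ℝ) := by linarith
  set C : Finset (Sym2 V) := G.edgeFinset.filter (· ∈ edgeCut G U) with hC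
  have hCset : edgeCut G U = ↑C := by
    ext e
    simp only [hC, Finset.coe_filter, Set.mem_setOf_eq, SimpleGraph.mem_edgeFinset]
    constructor
    · intro he
      refine ⟨?_, he⟩
      obtain ⟨a, b, hab, rfl, -, -⟩ := he
      exact hab
    · exact fun h => h.2
  set Cm : Finset (Sym2 V) := C ∩ M with hCm
  set Cn : Finset (Sym2 V) := C \ M with hCn
  set Uf : Finset V := Finset.univ.filter (· ∈ U) with hUf
  have hUfcard : Uf.card = U.ncard := by
    have : Fintype ↥U := (Set.toFinite U).fintype
    rw [Set.ncard_eq_toFinset_card']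
    congr 1
    ext v
    simp [hUf, Set.mem_toFinset]
  -- parity of Cm
  have hCmodd : Odd Cm.card := by
    have h1 := parity_count G U M hMsub
    have hM1 : ∀ v ∈ Uf, (M.filter (fun e => v ∈ e)).card = 1 := fun v _ => hMdeg v
    rw [Finset.sum_congr rfl hM1, Finset.sum_const, smul_eq_mul, mul_one] at h1
    have hMfil : M.filter (· ∈ edgeCut G U) = Cm := by
      ext e
      have hem : e ∈ M → e ∈ G.edgeFinset := fun h => hMsub h
      simp only [Finset.mem_filter, hCm, Finset.mem_inter, hC]
      tauto
    rw [hMfil, hUfcard] at h1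
    rw [← ZMod.natCast_eq_one_iff_odd, ← h1, ZMod.natCast_eq_one_iff_odd]
    exact hU
  -- parity of Cn
  have hCneven : Even Cn.card := by
    have h1 := parity_count G U (G.edgeFinset \ M) Finset.sdiff_subset
    have hN2 : ∀ v ∈ Uf, ((G.edgeFinset \ M).filter (fun e => v ∈ e)).card = 2 := by
      intro v _
      have hsd : (G.edgeFinset \ M).filter (fun e => v ∈ e)
          = G.edgeFinset.filter (fun e => v ∈ e) \ M.filter (fun e => v ∈ e) := by
        ext e
        simp only [Finset.mem_filter, Finset.mem_sdiff]
        tauto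
      have hsub : M.filter (fun e => v ∈ e) ⊆ G.edgeFinset.filter (fun e => v ∈ e) :=
        Finset.filter_subset_filter _ hMsub
      have hdeg : (G.edgeFinset.filter (fun e => v ∈ e)).card = 3 := by
        have h3 := G.card_incidenceFinset_eq_degree v
        rw [SimpleGraph.incidenceFinset_eq_filter] at h3
        rw [h3]
        exact hcub v
      rw [hsd, Finset.card_sdiff_of_subset hsub, hdeg, hMdeg v]
    rw [Finset.sum_congr rfl hN2, Finset.sum_const, smul_eq_mul] at h1
    have hNfil : (G.edgeFinset \ M).filter (· ∈ edgeCut G U) = Cn := by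
      ext e
      simp only [Finset.mem_filter, Finset.mem_sdiff, hCn, hC]
      tauto
    rw [hNfil] at h1
    rw [← ZMod.natCast_eq_zero_iff_even, ← h1]
    push_cast
    rw [show (2 : ZMod 2) = 0 from rfl, mul_zero]
  -- the sum
  have hsum : ∑ᶠ e ∈ edgeCut G U, f e
      = (Cm.card : ℝ) * (1 / (k : ℝ)) + (Cn.card : ℝ) * (((k : ℝ) - 1) / (2 * k)) := by
    rw [hCset, finsum_mem_coe_finset]
    have hsplit : Cn ∪ Cm = C := Finset.sdiff_union_inter C M
    have hdisj : Disjoint Cn Cm := Finset.disjoint_sdiff_inter C M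
    rw [← hsplit, Finset.sum_union hdisj]
    have e1 : ∑ e ∈ Cm, f e = (Cm.card : ℝ) * (1 / (k : ℝ)) := by
      rw [Finset.sum_congr rfl fun e he => hfM e (Finset.mem_inter.mp he).2,
        Finset.sum_const, nsmul_eq_mul]
    have e2 : ∑ e ∈ Cn, f e = (Cn.card : ℝ) * (((k : ℝ) - 1) / (2 * k)) := by
      rw [Finset.sum_congr rfl fun e he => by
        obtain ⟨h1, h2⟩ := Finset.mem_sdiff.mp he
        exact hfnM e (Finset.mem_filter.mp h1).1 h2,
        Finset.sum_const, nsmul_eq_mul]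
    rw [e1, e2]
    ring
  rw [hsum]
  by_cases hcase : Cn.card = 0
  · -- cut is contained in M
    have hCnempty : Cn = ∅ := Finset.card_eq_zero.mp hcase
    have hsubM : C ⊆ M := by
      intro e he
      by_contra hnot
      have : e ∈ Cn := Finset.mem_sdiff.mpr ⟨he, hnot⟩
      simp [hCnempty] at this
    have hnoM : ∀ a b : V, G.Adj a b → a ∈ U → b ∉ U → s(a, b) ∈ M := by
      intro a b hab ha hb
      exact hsubM (Finset.mem_filter.mpr ⟨SimpleGraph.mem_edgeFinset.mpr hab,
        ⟨a, b, hab, rfl, ha, hb⟩⟩)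
    -- nonemptiness
    have hCmpos : 0 < Cm.card := hCmodd.pos
    obtain ⟨e0, he0⟩ := Finset.card_pos.mp hCmpos
    obtain ⟨a0, b0, hab0, he0eq, ha0, hb0⟩ := (Finset.mem_filter.mp
      (Finset.mem_inter.mp he0).1).2
    have hUne : U.Nonempty := ⟨a0, ha0⟩
    have hUcne : Uᶜ.Nonempty := ⟨b0, hb0⟩
    -- every vertex has two distinct non-matching neighbors
    have hdeg2 : ∀ v : V, ∃ a b : V, a ≠ b ∧ G.Adj v a ∧ G.Adj v b ∧
        s(v, a) ∉ M ∧ s(v, b) ∉ M := by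
      intro v
      set Anm := (G.neighborFinset v).filter (fun w => s(v, w) ∉ M) with hAnm
      have hAcard : (G.neighborFinset v).card = 3 := by
        rw [G.card_neighborFinset_eq_degree]; exact hcub v
      have hM1 : ((G.neighborFinset v).filter (fun w => ¬ s(v, w) ∉ M)).card ≤ 1 := by
        have : ((G.neighborFinset v).filter (fun w => ¬ s(v, w) ∉ M)).card
            ≤ (M.filter (fun e => v ∈ e)).card := by
          apply Finset.card_le_card_of_injOn (fun w => s(v, w))
          · intro w hw
            obtain ⟨hw1, hw2⟩ := Finset.mem_filter.mp hw
            rw [not_not] at hw2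
            exact Finset.mem_filter.mpr ⟨hw2, Sym2.mem_mk_left v w⟩
          · intro w1 _ w2 _ hww
            exact (Sym2.congr_right).mp hww
        rw [hMdeg v] at this
        exact this
      have hA2 : 2 ≤ Anm.card := by
        have := Finset.card_filter_add_card_filter_not
          (s := G.neighborFinset v) (p := fun w => s(v, w) ∉ M)
        rw [hAnm]
        omega
      have hA1 : 1 < Anm.card := lt_of_lt_of_le one_lt_two hA2
      obtain ⟨a, ha, b, hb, hab⟩ := Finset.one_lt_card.mp hA1
      obtain ⟨ha1, ha2⟩ := Finset.mem_filter.mp ha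
      obtain ⟨hb1, hb2⟩ := Finset.mem_filter.mp hb
      exact ⟨a, b, hab, (SimpleGraph.mem_neighborFinset _ _ _).mp ha1,
        (SimpleGraph.mem_neighborFinset _ _ _).mp hb1, ha2, hb2⟩
    -- both induced graphs contain cycles
    have hfinU : Fintype ↥U := (Set.toFinite U).fintype
    have hfinUc : Fintype ↥(Uᶜ) := (Set.toFinite Uᶜ).fintype
    have hneU : Nonempty ↥U := hUne.to_subtype
    have hneUc : Nonempty ↥(Uᶜ) := hUcne.to_subtype
    have hacU : ¬ (G.induce U).IsAcyclic := by
      apply not_acyclic_of_two_nbrs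
      rintro ⟨v, hv⟩
      obtain ⟨a, b, hab, hva, hvb, hma, hmb⟩ := hdeg2 v
      have haU : a ∈ U := by
        by_contra haU
        exact hma (hnoM v a hva hv haU)
      have hbU : b ∈ U := by
        by_contra hbU
        exact hmb (hnoM v b hvb hv hbU)
      exact ⟨⟨a, haU⟩, ⟨b, hbU⟩, fun h => hab (congrArg Subtype.val h), hva, hvb⟩
    have hacUc : ¬ (G.induce Uᶜ).IsAcyclic := by
      apply not_acyclic_of_two_nbrs
      rintro ⟨v, hv⟩
      have hvU : v ∉ U := hv
      obtain ⟨a, b, hab, hva, hvb, hma, hmb⟩ := hdeg2 v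
      have haU : a ∈ Uᶜ := by
        intro haU
        apply hma
        rw [Sym2.eq_swap]
        exact hnoM a v hva.symm haU hvU
      have hbU : b ∈ Uᶜ := by
        intro hbU
        apply hmb
        rw [Sym2.eq_swap]
        exact hnoM b v hvb.symm hbU hvU
      exact ⟨⟨a, haU⟩, ⟨b, hbU⟩, fun h => hab (congrArg Subtype.val h), hva, hvb⟩
    have hkC : k ≤ C.card := by
      have := hcyc U hacU hacUc
      rwa [hCset, Set.ncard_coe_finset] at this
    have hCmC : Cm = C := Finset.inter_eq_left.mpr hsubM
    have hkCm : (k : ℝ) ≤ (Cm.card : ℝ) := by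
      rw [hCmC]; exact_mod_cast hkC
    rw [hcase]
    push_cast
    rw [zero_mul, add_zero]
    calc (1 : ℝ) = (k : ℝ) * (1 / k) := by field_simp
    _ ≤ (Cm.card : ℝ) * (1 / k) := by
        apply mul_le_mul_of_nonneg_right hkCm
        positivity
  · -- at least two non-matching cut edges
    have hCn2 : 2 ≤ Cn.card := by
      rcases hCneven with ⟨r, hr⟩
      omega
    have hCm1 : 1 ≤ Cm.card := hCmodd.pos
    have h1 : (1 : ℝ) ≤ (Cm.card : ℝ) := by exact_mod_cast hCm1
    have h2 : (2 : ℝ) ≤ (Cn.card : ℝ) := by exact_mod_cast hCn2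
    have hnn1 : (0:ℝ) ≤ 1 / (k:ℝ) := by positivity
    have hnn2 : (0:ℝ) ≤ ((k:ℝ) - 1) / (2*k) := by
      apply div_nonneg <;> linarith
    calc (1 : ℝ) = 1 * (1 / (k : ℝ)) + 2 * (((k : ℝ) - 1) / (2 * k)) := by
          field_simp
          ring
    _ ≤ (Cm.card : ℝ) * (1 / (k : ℝ)) + (Cn.card : ℝ) * (((k : ℝ) - 1) / (2 * k)) := by
          gcongr
end
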